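/- arXiv:1411.1645 — 3 statements merged into one kernel-verified Lean document; each statement's English description precedes it below -/
import Mathlib

section
/- Let K ≥ 2 be an integer and let 0 < ω < π. Then the equation (K+1) sin(ω − 2φ) = (K−1) sin ω has exactly one solution φ = φ* in the interval (−π/2 + ω, π/2) when π/2 ≤ ω < π, and exactly one solution φ = φ* in the interval (0, ω) when 0 < ω < π/2. -/
open Real Set

lemma sin_unique_sol (a b t : ℝ) (hab : a < b) (ha : -(Real.pi / 2) ≤ a)
    (hb : b ≤ Real.pi / 2) (h1 : Real.sin a < t) (h2 : t < Real.sin b) :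
    ∃! x : ℝ, x ∈ Ioo a b ∧ Real.sin x = t := by
  obtain ⟨x, hx, hsx⟩ :=
    intermediate_value_Ioo hab.le Real.continuous_sin.continuousOn ⟨h1, h2⟩
  refine ⟨x, ⟨hx, hsx⟩, ?_⟩
  rintro y ⟨hy, hsy⟩
  have hmem : ∀ z : ℝ, z ∈ Ioo a b → z ∈ Icc (-(Real.pi / 2)) (Real.pi / 2) :=
    fun z hz => ⟨ha.trans hz.1.le, hz.2.le.trans hb⟩
  exact Real.injOn_sin (hmem y hy) (hmem x hx) (by rw [hsy, hsx])

/-- Meijer's lemma, existence and uniqueness of `φ*`: for an integer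
`K ≥ 2` and `0 < ω < π`, the equation `(K+1) sin(ω − 2φ) = (K−1) sin ω` has exactly one
solution in `(−π/2 + ω, π/2)` when `π/2 ≤ ω < π`, and exactly one solution in `(0, ω)`
when `0 < ω < π/2`. -/
theorem phi_star_exists_unique (K : ℕ) (hK : 2 ≤ K) (ω : ℝ) (hω₁ : 0 < ω)
    (hω₂ : ω < Real.pi) :
    (Real.pi / 2 ≤ ω →
      ∃! φ : ℝ, φ ∈ Ioo (-(Real.pi / 2) + ω) (Real.pi / 2) ∧
        ((K : ℝ) + 1) * Real.sin (ω - 2 * φ) = ((K : ℝ) - 1) * Real.sin ω) ∧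
    (ω < Real.pi / 2 →
      ∃! φ : ℝ, φ ∈ Ioo 0 ω ∧
        ((K : ℝ) + 1) * Real.sin (ω - 2 * φ) = ((K : ℝ) - 1) * Real.sin ω) := by
  have hKR : (2 : ℝ) ≤ (K : ℝ) := by exact_mod_cast hK
  have hKpos : (0 : ℝ) < (K : ℝ) + 1 := by linarith
  set t : ℝ := ((K : ℝ) - 1) * Real.sin ω / ((K : ℝ) + 1) with ht
  have hsinpos : 0 < Real.sin ω := Real.sin_pos_of_pos_of_lt_pi hω₁ hω₂
  have heq : ∀ y : ℝ, ((K : ℝ) + 1) * Real.sin y = ((K : ℝ) - 1) * Real.sin ω ↔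
      Real.sin y = t := by
    intro y
    rw [ht, eq_div_iff hKpos.ne']
    constructor <;> intro h <;> linarith
  have htlt : t < Real.sin ω := by
    rw [ht, div_lt_iff₀ hKpos]
    nlinarith
  have hltt : -Real.sin ω < t := by
    rw [ht, lt_div_iff₀ hKpos]
    nlinarith
  constructor
  · intro hω
    have h1 : Real.sin (ω - Real.pi) = -Real.sin ω := by
      rw [show ω - Real.pi = -(Real.pi - ω) by ring, Real.sin_neg, Real.sin_pi_sub]
    have h2 : Real.sin (Real.pi - ω) = Real.sin ω := Real.sin_pi_sub ω
    obtain ⟨x, ⟨hx, hsx⟩, hxu⟩ :=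
      sin_unique_sol (ω - Real.pi) (Real.pi - ω) t (by linarith) (by linarith)
        (by linarith) (by rw [h1]; exact hltt) (by rw [h2]; exact htlt)
    refine ⟨(ω - x) / 2, ⟨⟨⟨by linarith [hx.2], by linarith [hx.1]⟩, ?_⟩, ?_⟩⟩
    · rw [heq, show ω - 2 * ((ω - x) / 2) = x by ring]
      exact hsx
    · rintro φ ⟨hφ, hφeq⟩
      rw [heq] at hφeq
      have := hxu (ω - 2 * φ) ⟨⟨by linarith [hφ.2], by linarith [hφ.1]⟩, hφeq⟩
      linarith
  · intro hω
    have h1 : Real.sin (-ω) = -Real.sin ω := Real.sin_neg ω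
    obtain ⟨x, ⟨hx, hsx⟩, hxu⟩ :=
      sin_unique_sol (-ω) ω t (by linarith) (by linarith) (by linarith)
        (by rw [h1]; exact hltt) htlt
    refine ⟨(ω - x) / 2, ⟨⟨⟨by linarith [hx.2], by linarith [hx.1]⟩, ?_⟩, ?_⟩⟩
    · rw [heq, show ω - 2 * ((ω - x) / 2) = x by ring]
      exact hsx
    · rintro φ ⟨hφ, hφeq⟩
      rw [heq] at hφeq
      have := hxu (ω - 2 * φ) ⟨⟨by linarith [hφ.2], by linarith [hφ.1]⟩, hφeq⟩
      linarith
end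

section
/- Let s be a complex number with Im s > 0 (so 0 < arg s < π). Then Σ_{k=0}^∞ e^{2πiks} / Γ*(s e^{−πi}) = Γ*(s); equivalently, 1 / ( (1 − e^{2πis}) Γ*(s e^{−πi}) ) = Γ*(s), where s e^{−πi} has principal argument arg s − π ∈ (−π, 0). -/
/-!
For `Im s > 0` the principal logarithm satisfies `log (-s) = log s - πi`, so the powers in the
denominators of `Γ*(s)` and `Γ*(-s)` combine to `i e^{πis} / s`, while Euler's reflection formula
gives `Γ(s) Γ(-s) = -π / (s sin πs)`. Hence `Γ*(s) Γ*(-s) (1 - e^{2πis}) = 1`. Since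
`s e^{-πi} = -s` and `|e^{2πis}| < 1`, the series is geometric with sum `1 / (1 - e^{2πis})`.
-/

open Complex Real

noncomputable section

/-- The scaled gamma function `Γ*(z) = Γ(z)/(√(2π) z^(z-1/2) e^(-z))`. -/
def GammaStar (z : ℂ) : ℂ :=
  Complex.Gamma z /
    ((Real.sqrt (2 * Real.pi) : ℂ) * z ^ (z - 1 / 2) * Complex.exp (-z))

lemma Complex.log_neg_of_im_pos {z : ℂ} (hz : 0 < z.im) : log (-z) = log z - π * I := by
  apply Complex.ext <;> simp [log_re, log_im, arg_neg_eq_arg_sub_pi_of_im_pos hz]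

lemma Complex.cpow_sub_half_mul_neg_cpow_of_im_pos {z : ℂ} (hz : 0 < z.im) :
    z ^ (z - 1 / 2) * (-z) ^ (-z - 1 / 2) = I * exp (π * I * z) / z := by
  have hz0 : z ≠ 0 := by rintro rfl; simp at hz
  rw [cpow_def_of_ne_zero hz0, cpow_def_of_ne_zero (neg_ne_zero.2 hz0), log_neg_of_im_pos hz,
    ← exp_add, show log z * (z - 1 / 2) + (log z - π * I) * (-z - 1 / 2)
      = π * I * z + π / 2 * I - log z by ring,
    exp_sub, exp_add, exp_log hz0, exp_pi_div_two_mul_I, mul_comm]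

lemma Complex.Gamma_mul_Gamma_neg {z : ℂ} (hz : z ≠ 0) :
    Gamma z * Gamma (-z) = -π / (z * sin (π * z)) := by
  have h := Gamma_add_one (-z) (neg_ne_zero.2 hz)
  rw [neg_add_eq_sub] at h
  rw [div_mul_eq_div_div_swap, neg_div, ← Gamma_mul_Gamma_one_sub, h]
  field_simp

lemma Complex.two_mul_I_mul_sin_mul_exp (z : ℂ) :
    2 * I * sin z * exp (z * I) = exp (2 * z * I) - 1 := by
  rw [sin, show 2 * z * I = z * I + z * I by ring, exp_add]
  have hinv : exp (-z * I) * exp (z * I) = 1 := by rw [← exp_add]; simp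
  linear_combination (exp (-z * I) - exp (z * I)) * exp (z * I) * I_mul_I - hinv

lemma Complex.sin_pi_mul_ne_zero_of_im_ne_zero {z : ℂ} (hz : z.im ≠ 0) : sin (π * z) ≠ 0 := by
  rw [sin_ne_zero_iff]
  intro k hk
  apply hz
  simpa using congrArg (·.im / π) hk

theorem GammaStar_eq_inv_one_sub_exp_mul_GammaStar_neg {s : ℂ} (hs : 0 < s.im) :
    GammaStar s = ((1 - exp (2 * π * I * s)) * GammaStar (-s))⁻¹ := by
  refine eq_inv_of_mul_eq_one_left ?_
  have hs0 : s ≠ 0 := by rintro rfl; simp at hs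
  have hsin := sin_pi_mul_ne_zero_of_im_ne_zero hs.ne'
  have hsqrt : ((√(2 * π) : ℝ) : ℂ) * ((√(2 * π) : ℝ) : ℂ) = 2 * π := by
    rw [← ofReal_mul, Real.mul_self_sqrt (by positivity)]; push_cast; ring
  have hden : (√(2 * π) * s ^ (s - 1 / 2) * exp (-s)) * (√(2 * π) * (-s) ^ (-s - 1 / 2) * exp (- -s))
      = 2 * π * (I * exp (π * I * s) / s) := by
    have hexp_cancel : exp (-s) * exp s = 1 := by rw [← Complex.exp_add]; simp
    rw [← cpow_sub_half_mul_neg_cpow_of_im_pos hs, ← hsqrt, neg_neg]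
    linear_combination (√(2 * π) * s ^ (s - 1 / 2) * (√(2 * π) * (-s) ^ (-s - 1 / 2))) * hexp_cancel
  have hone_sub : 1 - exp (2 * π * I * s) = -(2 * I * sin (π * s) * exp (π * s * I)) := by
    rw [two_mul_I_mul_sin_mul_exp]; ring_nf
  rw [GammaStar, GammaStar, mul_left_comm, div_mul_div_comm, hden, Gamma_mul_Gamma_neg hs0, hone_sub]
  field_simp

lemma Complex.norm_exp_two_pi_I_mul_lt_one {s : ℂ} (hs : 0 < s.im) : ‖exp (2 * π * I * s)‖ < 1 := by
  rw [norm_exp, Real.exp_lt_one_iff]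
  simpa using mul_pos Real.two_pi_pos hs

lemma Complex.tsum_exp_two_pi_I_mul_nat_mul {s : ℂ} (hs : 0 < s.im) :
    ∑' k : ℕ, exp (2 * π * I * k * s) = (1 - exp (2 * π * I * s))⁻¹ := by
  rw [← tsum_geometric_of_norm_lt_one (norm_exp_two_pi_I_mul_lt_one hs)]
  congr 1 with k
  rw [← exp_nat_mul]
  ring_nf

lemma Complex.mul_exp_neg_pi_mul_I (z : ℂ) : z * exp (-(π * I)) = -z := by
  simp [exp_neg]

/-- for `Im s > 0`,
`Σ_{k≥0} e^{2πiks}/Γ*(s e^{−πi}) = Γ*(s)`, and equivalently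
`1/((1 − e^{2πis}) Γ*(s e^{−πi})) = Γ*(s)`. -/
theorem tsum_reciprocal_gammaStar (s : ℂ) (hs : 0 < s.im) :
    (∑' k : ℕ, Complex.exp (2 * (Real.pi : ℂ) * Complex.I * (k : ℂ) * s) /
        GammaStar (s * Complex.exp (-((Real.pi : ℂ) * Complex.I)))) = GammaStar s ∧
    1 / ((1 - Complex.exp (2 * (Real.pi : ℂ) * Complex.I * s)) *
        GammaStar (s * Complex.exp (-((Real.pi : ℂ) * Complex.I)))) = GammaStar s := by
  rw [mul_exp_neg_pi_mul_I, GammaStar_eq_inv_one_sub_exp_mul_GammaStar_neg hs, one_div]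
  refine ⟨?_, rfl⟩
  rw [tsum_div_const, tsum_exp_two_pi_I_mul_nat_mul hs, mul_inv, div_eq_mul_inv]
end
end

section
/- Let λ > 0 and let a be a complex number with Re a > 0, and put z = λa. Then Γ(−a, z) = z^{−a} e^{−z} ∫_0^∞ exp( −a(λ e^t + t − λ) ) dt, where the integral is over t ∈ (0, ∞). -/
open Complex Real MeasureTheory Set Filter Asymptotics

noncomputable section

/-- `Λ(λ) = λ + log λ + 1 + πi`. -/
def Lam (l : ℝ) : ℂ := (l : ℂ) + (Real.log l : ℂ) + 1 + (Real.pi : ℂ) * Complex.I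

/-- `Λ̄(λ) = λ + log λ + 1 − πi`. -/
def LamBar (l : ℝ) : ℂ := (l : ℂ) + (Real.log l : ℂ) + 1 - (Real.pi : ℂ) * Complex.I

/-- `ω(λ) = arg(λ + log λ + 1 + πi)`, the principal argument. -/
def om (l : ℝ) : ℝ := (Lam l).arg

/-- The base function `(λ+1)t/(λ e^t + t − λ)`, extended analytically by `1` at `t = 0`. -/
def phiFun (l : ℝ) (t : ℂ) : ℂ :=
  if t = 0 then 1 else ((l : ℂ) + 1) * t / ((l : ℂ) * Complex.exp t + t - (l : ℂ))

/-- The coefficients `b_n(−λ)`. -/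
def bCoeff (l : ℝ) (n : ℕ) : ℂ :=
  ((l : ℂ) + 1) ^ n * iteratedDeriv n (fun t => (phiFun l t) ^ (n + 1)) 0

/-- The incomplete gamma function `Γ(−a, λa)`. -/
def Gi (l : ℝ) (a : ℂ) : ℂ :=
  ∫ u in Ioi (0 : ℝ),
    ((l : ℂ) * a + (u : ℂ)) ^ (-a - 1) * Complex.exp (-((l : ℂ) * a + (u : ℂ)))

/-- The partial sum `Σ_{n<N} a^n b_n(−λ)/((λ+1)a)^(2n+1)`. -/
def partSum (l : ℝ) (a : ℂ) (N : ℕ) : ℂ :=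
  ∑ n ∈ Finset.range N, a ^ n * bCoeff l n / ((((l : ℂ) + 1) * a) ^ (2 * n + 1))

/-- The remainder `R_N(a,λ)`, defined by
`Γ(−a,λa) = (λa)^(−a) e^(−λa) (Σ_{n<N} a^n b_n(−λ)/((λ+1)a)^(2n+1) + R_N(a,λ))`. -/
def Rrem (l : ℝ) (N : ℕ) (a : ℂ) : ℂ :=
  ((l : ℂ) * a) ^ a * Complex.exp ((l : ℂ) * a) * Gi l a - partSum l a N

/-! Substituting `u = z v` turns the ray `z + [0, ∞)` of the defining integral into the ray
`z [1, ∞)`. This rotation is legitimate because, for `f` holomorphic with `f, f' = O(e^{-Re ζ})`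
on `Re ζ ≥ Re z`, the integral `I(c) = ∫₀^∞ c f(z + c w) dw` satisfies
`∂_c (c f(z + c w)) = ∂_w (w f(z + c w))`, so `I' = 0` on `Re c > 0` and `I(z) = I(1)`.
Then `v = e^t - 1` turns `z (1 + v)` into `z e^t`, and since `z = λa`,
`z e^t (z e^t)^{-a-1} e^{-z e^t} = z^{-a} e^{-z} exp(-a(λe^t + t - λ))`. -/

open scoped Topology

lemma re_add_mul_ofReal (z b : ℂ) (w : ℝ) : (z + b * w).re = z.re + b.re * w := by simp

lemma integrableOn_one_add_mul_mul_exp_neg_mul (M : ℝ) {δ : ℝ} (hδ : 0 < δ) :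
    IntegrableOn (fun w : ℝ => (1 + M * w) * Real.exp (-δ * w)) (Ioi 0) := by
  have hw : IntegrableOn (fun w : ℝ => w * Real.exp (-δ * w)) (Ioi 0) := by
    simpa using integrableOn_rpow_mul_exp_neg_mul_rpow (s := 1) (p := 1) (by norm_num) one_pos hδ
  refine ((exp_neg_integrableOn_Ioi 0 hδ).add (hw.const_mul M)).congr_fun (fun w _ => ?_)
    measurableSet_Ioi
  simp only [Pi.add_apply]
  ring

lemma integral_Ioi_exp_smul_comp_exp_sub_one {E : Type*} [NormedAddCommGroup E] [NormedSpace ℝ E]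
    (g : ℝ → E) :
    ∫ t in Ioi 0, Real.exp t • g (Real.exp t - 1) = ∫ v in Ioi 0, g v := by
  rw [integral_comp_exp_Ioi (fun y => g (y - 1)) 0, Real.exp_zero]
  have := (measurePreserving_sub_right volume (1 : ℝ)).setIntegral_preimage_emb
    (measurableEmbedding_subRight 1) g (Ioi 0)
  simpa using this

section RayRotation

variable {E : Type*} [NormedAddCommGroup E]

lemma norm_comp_add_mul_ofReal_le {g : ℂ → E} {z b : ℂ} {C δ w : ℝ}
    (hg : ∀ ζ, z.re ≤ ζ.re → ‖g ζ‖ ≤ C * Real.exp (-ζ.re)) (hδ : 0 ≤ δ) (hδb : δ ≤ b.re)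
    (hw : 0 ≤ w) : ‖g (z + b * w)‖ ≤ C * Real.exp (-z.re) * Real.exp (-δ * w) := by
  have hC : 0 ≤ C :=
    nonneg_of_mul_nonneg_left ((norm_nonneg _).trans (hg z le_rfl)) (Real.exp_pos _)
  have hre := re_add_mul_ofReal z b w
  calc ‖g (z + b * w)‖ ≤ C * Real.exp (-(z + b * w).re) := hg _ (by rw [hre]; nlinarith)
    _ ≤ C * (Real.exp (-z.re) * Real.exp (-δ * w)) := by
        rw [← Real.exp_add, hre]; gcongr; nlinarith
    _ = C * Real.exp (-z.re) * Real.exp (-δ * w) := by ring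

variable [NormedSpace ℂ E]

lemma hasDerivAt_smul_comp_add_mul {f : ℂ → E} {f' : E} {z κ ζ : ℂ}
    (hf : HasDerivAt f f' (z + ζ * κ)) :
    HasDerivAt (fun ζ => ζ • f (z + ζ * κ)) (f (z + ζ * κ) + (ζ * κ) • f') ζ := by
  refine ((hasDerivAt_id ζ).smul
    (hf.scomp ζ (((hasDerivAt_id ζ).mul_const κ).const_add z))).congr_deriv ?_
  simp [smul_smul, add_comm]

variable {f : ℂ → E} {z b : ℂ} {C : ℝ}

lemma continuousOn_comp_add_mul_ofReal (hf : ∀ ζ, z.re ≤ ζ.re → DifferentiableAt ℂ f ζ)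
    (hb : 0 ≤ b.re) : ContinuousOn (fun w : ℝ => f (z + b * w)) (Ici 0) := fun w hw =>
  ((hf _ (by rw [re_add_mul_ofReal]; nlinarith [mem_Ici.1 hw])).continuousAt.comp
    (by fun_prop : Continuous fun w : ℝ => z + b * w).continuousAt).continuousWithinAt

lemma norm_add_mul_smul_deriv_le (hfC : ∀ ζ, z.re ≤ ζ.re → ‖f ζ‖ ≤ C * Real.exp (-ζ.re))
    (hf'C : ∀ ζ, z.re ≤ ζ.re → ‖deriv f ζ‖ ≤ C * Real.exp (-ζ.re)) {δ M w : ℝ} (hδ : 0 ≤ δ)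
    (hδb : δ ≤ b.re) (hbM : ‖b‖ ≤ M) (hw : 0 ≤ w) :
    ‖f (z + b * w) + (b * w) • deriv f (z + b * w)‖ ≤
      C * Real.exp (-z.re) * ((1 + M * w) * Real.exp (-δ * w)) := by
  have h₀ := norm_comp_add_mul_ofReal_le hfC hδ hδb hw
  have h₁ := norm_comp_add_mul_ofReal_le hf'C hδ hδb hw
  calc _ ≤ ‖f (z + b * w)‖ + ‖b‖ * w * ‖deriv f (z + b * w)‖ := by
        refine (norm_add_le _ _).trans_eq ?_
        rw [norm_smul, norm_mul, norm_real, Real.norm_of_nonneg hw]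
    _ ≤ C * Real.exp (-z.re) * Real.exp (-δ * w) +
          M * w * (C * Real.exp (-z.re) * Real.exp (-δ * w)) := by
        gcongr
        exact mul_nonneg ((norm_nonneg b).trans hbM) hw
    _ = C * Real.exp (-z.re) * ((1 + M * w) * Real.exp (-δ * w)) := by ring

lemma integrableOn_comp_add_mul_ofReal (hf : ∀ ζ, z.re ≤ ζ.re → DifferentiableAt ℂ f ζ)
    (hfC : ∀ ζ, z.re ≤ ζ.re → ‖f ζ‖ ≤ C * Real.exp (-ζ.re)) (hb : 0 < b.re) :
    IntegrableOn (fun w : ℝ => f (z + b * w)) (Ioi 0) :=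
  Integrable.mono' ((exp_neg_integrableOn_Ioi 0 hb).const_mul _)
    (((continuousOn_comp_add_mul_ofReal hf hb.le).mono Ioi_subset_Ici_self).aestronglyMeasurable
      measurableSet_Ioi)
    ((ae_restrict_mem measurableSet_Ioi).mono fun _ hw =>
      norm_comp_add_mul_ofReal_le hfC hb.le le_rfl (le_of_lt hw))

variable [CompleteSpace E]

lemma aestronglyMeasurable_add_mul_smul_deriv
    (hf : ∀ ζ, z.re ≤ ζ.re → DifferentiableAt ℂ f ζ) (hb : 0 ≤ b.re) :
    AEStronglyMeasurable (fun w : ℝ => f (z + b * w) + (b * w) • deriv f (z + b * w))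
      (volume.restrict (Ioi 0)) := by
  refine ((continuousOn_comp_add_mul_ofReal hf hb).mono Ioi_subset_Ici_self
    |>.aestronglyMeasurable measurableSet_Ioi).add (AEStronglyMeasurable.smul ?_ ?_)
  · exact (by fun_prop : Continuous fun w : ℝ => b * w).aestronglyMeasurable
  · exact ((stronglyMeasurable_deriv f).comp_measurable (by fun_prop)).aestronglyMeasurable

lemma integral_add_mul_smul_deriv_eq_zero (hf : ∀ ζ, z.re ≤ ζ.re → DifferentiableAt ℂ f ζ)
    (hfC : ∀ ζ, z.re ≤ ζ.re → ‖f ζ‖ ≤ C * Real.exp (-ζ.re))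
    (hf'C : ∀ ζ, z.re ≤ ζ.re → ‖deriv f ζ‖ ≤ C * Real.exp (-ζ.re)) (hb : 0 < b.re) :
    ∫ w in Ioi (0 : ℝ), (f (z + b * w) + (b * w) • deriv f (z + b * w)) = 0 := by
  have hderiv : ∀ w ∈ Ici (0 : ℝ), HasDerivAt (fun w : ℝ => (w : ℂ) • f (z + b * w))
      (f (z + b * w) + (b * w) • deriv f (z + b * w)) w := by
    intro w hw
    have hζ : z.re ≤ (z + w * b).re := by
      rw [mul_comm, re_add_mul_ofReal]; nlinarith [mem_Ici.1 hw]
    have key := hasDerivAt_smul_comp_add_mul (hf _ hζ).hasDerivAt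
    simp_rw [mul_comm _ b] at key
    exact (key.scomp w (hasDerivAt_id w).ofReal_comp).congr_deriv (by simp)
  have hint : IntegrableOn (fun w : ℝ => f (z + b * w) + (b * w) • deriv f (z + b * w)) (Ioi 0) :=
    Integrable.mono' (((integrableOn_one_add_mul_mul_exp_neg_mul ‖b‖ hb).const_mul
      (C * Real.exp (-z.re)))) (aestronglyMeasurable_add_mul_smul_deriv hf hb.le)
      ((ae_restrict_mem measurableSet_Ioi).mono fun w hw =>
        norm_add_mul_smul_deriv_le hfC hf'C hb.le le_rfl le_rfl (le_of_lt hw))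
  have hlim : Tendsto (fun w : ℝ => (w : ℂ) • f (z + b * w)) atTop (𝓝 0) := by
    have := (tendsto_rpow_mul_exp_neg_mul_atTop_nhds_zero 1 b.re hb).const_mul
      (C * Real.exp (-z.re))
    refine squeeze_zero_norm' ?_ (by simpa using this)
    filter_upwards [eventually_ge_atTop 0] with w hw
    rw [norm_smul, norm_real, Real.norm_of_nonneg hw, ← neg_mul]
    calc w * ‖f (z + b * w)‖ ≤ w * (C * Real.exp (-z.re) * Real.exp (-b.re * w)) :=
          mul_le_mul_of_nonneg_left (norm_comp_add_mul_ofReal_le hfC hb.le le_rfl hw) hw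
      _ = _ := by ring
  simpa using integral_Ioi_of_hasDerivAt_of_tendsto' hderiv hint hlim

lemma hasDerivAt_integral_smul_comp_add_mul (hf : ∀ ζ, z.re ≤ ζ.re → DifferentiableAt ℂ f ζ)
    (hfC : ∀ ζ, z.re ≤ ζ.re → ‖f ζ‖ ≤ C * Real.exp (-ζ.re))
    (hf'C : ∀ ζ, z.re ≤ ζ.re → ‖deriv f ζ‖ ≤ C * Real.exp (-ζ.re)) (hb : 0 < b.re) :
    HasDerivAt (fun c => ∫ w in Ioi (0 : ℝ), c • f (z + c * w)) 0 b := by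
  set δ := b.re / 2 with hδdef
  have hδ : 0 < δ := half_pos hb
  have hball : ∀ c ∈ Metric.ball b δ, δ ≤ c.re ∧ ‖c‖ ≤ ‖b‖ + δ := by
    intro c hc
    rw [Metric.mem_ball, dist_eq_norm] at hc
    have := abs_le.1 ((abs_re_le_norm (c - b)).trans hc.le)
    refine ⟨by simp only [sub_re] at this; linarith [hδdef], ?_⟩
    linarith [norm_le_insert' c b]
  obtain ⟨-, hderiv⟩ := hasDerivAt_integral_of_dominated_loc_of_deriv_le
    (F' := fun c (w : ℝ) => f (z + c * w) + (c * w) • deriv f (z + c * w))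
    (bound := fun w => C * Real.exp (-z.re) * ((1 + (‖b‖ + δ) * w) * Real.exp (-δ * w)))
    (Metric.ball_mem_nhds b hδ)
    (eventually_of_mem (Metric.ball_mem_nhds b hδ) fun c hc =>
      (((continuousOn_comp_add_mul_ofReal hf (hδ.le.trans (hball c hc).1)).const_smul c).mono
        Ioi_subset_Ici_self).aestronglyMeasurable measurableSet_Ioi)
    ((integrableOn_comp_add_mul_ofReal hf hfC hb).smul b)
    (aestronglyMeasurable_add_mul_smul_deriv hf hb.le)
    ((ae_restrict_mem measurableSet_Ioi).mono fun w hw c hc =>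
      norm_add_mul_smul_deriv_le hfC hf'C hδ.le (hball c hc).1 (hball c hc).2 (le_of_lt hw))
    ((integrableOn_one_add_mul_mul_exp_neg_mul _ hδ).const_mul _)
    ((ae_restrict_mem measurableSet_Ioi).mono fun w hw c hc =>
      hasDerivAt_smul_comp_add_mul (hf _ (by
        rw [re_add_mul_ofReal]; nlinarith [(hball c hc).1, mem_Ioi.1 hw])).hasDerivAt)
  rwa [integral_add_mul_smul_deriv_eq_zero hf hfC hf'C hb] at hderiv

theorem integral_smul_comp_add_mul_ofReal (hf : ∀ ζ, z.re ≤ ζ.re → DifferentiableAt ℂ f ζ)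
    (hfC : ∀ ζ, z.re ≤ ζ.re → ‖f ζ‖ ≤ C * Real.exp (-ζ.re))
    (hf'C : ∀ ζ, z.re ≤ ζ.re → ‖deriv f ζ‖ ≤ C * Real.exp (-ζ.re)) (hb : 0 < b.re) :
    ∫ w in Ioi (0 : ℝ), b • f (z + b * w) = ∫ u in Ioi (0 : ℝ), f (z + u) := by
  have hderiv := fun c (hc : c ∈ {c : ℂ | 0 < c.re}) =>
    hasDerivAt_integral_smul_comp_add_mul hf hfC hf'C hc
  simpa using (isOpen_lt continuous_const continuous_re).is_const_of_deriv_eq_zero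
    (convex_halfSpace_re_gt 0).isPreconnected
    (fun c hc => (hderiv c hc).differentiableAt.differentiableWithinAt)
    (fun c hc => (hderiv c hc).deriv) hb (show (0 : ℝ) < (1 : ℂ).re by simp)

end RayRotation

lemma norm_cpow_le_of_le_re {x : ℝ} (hx : 0 < x) {ζ s : ℂ} (hζ : x ≤ ζ.re) (hs : s.re ≤ 0) :
    ‖ζ ^ s‖ ≤ x ^ s.re * Real.exp (π * |s.im|) := by
  refine (norm_cpow_le ζ s).trans ?_
  rw [div_eq_mul_inv, ← Real.exp_neg]
  refine mul_le_mul (Real.rpow_le_rpow_of_nonpos hx (hζ.trans (re_le_norm ζ)) hs)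
    (Real.exp_le_exp.2 ?_) (Real.exp_pos _).le (by positivity)
  calc -(ζ.arg * s.im) ≤ |ζ.arg| * |s.im| := by rw [← abs_mul]; exact neg_le_abs _
    _ ≤ π * |s.im| := by gcongr; exact abs_arg_le_pi ζ

lemma hasDerivAt_cpow_mul_exp_neg (s : ℂ) {ζ : ℂ} (hζ : 0 < ζ.re) :
    HasDerivAt (fun ζ => ζ ^ s * cexp (-ζ)) ((s * ζ ^ (s - 1) - ζ ^ s) * cexp (-ζ)) ζ := by
  refine (((hasDerivAt_id ζ).cpow_const (c := s) (Or.inl hζ)).mul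
    (hasDerivAt_id ζ).neg.cexp).congr_deriv ?_
  simp only [id_eq, mul_one, Pi.neg_apply]
  ring

theorem integral_cpow_mul_exp_neg_along_ray {z b s : ℂ} (hz : 0 < z.re) (hs : s.re ≤ 0)
    (hb : 0 < b.re) :
    ∫ w in Ioi (0 : ℝ), b * ((z + b * w) ^ s * cexp (-(z + b * w))) =
      ∫ u in Ioi (0 : ℝ), (z + u) ^ s * cexp (-(z + u)) := by
  have hderiv := fun (ζ : ℂ) (hζ : z.re ≤ ζ.re) => hasDerivAt_cpow_mul_exp_neg s (hz.trans_le hζ)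
  have hpow := fun (ζ : ℂ) (hζ : z.re ≤ ζ.re) => norm_cpow_le_of_le_re hz hζ hs
  have hpow' : ∀ ζ : ℂ, z.re ≤ ζ.re →
      ‖ζ ^ (s - 1)‖ ≤ z.re ^ (s.re - 1) * Real.exp (π * |s.im|) := fun ζ hζ => by
    simpa using norm_cpow_le_of_le_re hz hζ (s := s - 1) (by rw [sub_re, one_re]; linarith)
  refine integral_smul_comp_add_mul_ofReal
    (C := (z.re ^ s.re + ‖s‖ * z.re ^ (s.re - 1)) * Real.exp (π * |s.im|))
    (fun ζ hζ => (hderiv ζ hζ).differentiableAt) (fun ζ hζ => ?_) (fun ζ hζ => ?_) hb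
  · rw [norm_mul, norm_exp, neg_re]
    gcongr
    refine (hpow ζ hζ).trans ?_
    gcongr
    exact le_add_of_nonneg_right (by positivity)
  · rw [(hderiv ζ hζ).deriv, norm_mul, norm_exp, neg_re]
    gcongr
    refine (norm_sub_le _ _).trans ?_
    rw [norm_mul, add_mul, add_comm, mul_assoc]
    exact add_le_add (hpow ζ hζ) (mul_le_mul_of_nonneg_left (hpow' ζ hζ) (norm_nonneg s))

lemma exp_smul_mul_cpow_mul_exp_neg {z : ℂ} (hz : z ≠ 0) (s : ℂ) (t : ℝ) :
    Real.exp t • (z * ((Real.exp t * z) ^ (s - 1) * cexp (-(Real.exp t * z)))) =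
      z ^ s * cexp (s * t - Real.exp t * z) := by
  rw [cpow_def_of_ne_zero (by simpa using hz), cpow_def_of_ne_zero hz,
    log_ofReal_mul (Real.exp_pos t) hz, Real.log_exp, Complex.real_smul]
  nth_rewrite 1 [← exp_log hz]
  rw [ofReal_exp, ← Complex.exp_add, ← Complex.exp_add, ← Complex.exp_add, ← Complex.exp_add]
  congr 1
  ring

/-- integral representation (2.1): for `λ > 0` and `Re a > 0`, with
`z = λa`, `Γ(−a, z) = z^{−a} e^{−z} ∫_0^∞ exp(−a(λ e^t + t − λ)) dt`. -/
theorem incGamma_integral_repr (l : ℝ) (hl : 0 < l) (a : ℂ) (ha : 0 < a.re) :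
    Gi l a = ((l : ℂ) * a) ^ (-a) * Complex.exp (-((l : ℂ) * a)) *
      ∫ t in Ioi (0 : ℝ),
        Complex.exp (-a * ((l : ℂ) * Complex.exp (t : ℂ) + (t : ℂ) - (l : ℂ))) := by
  set z := (l : ℂ) * a
  have hz : 0 < z.re := by simpa [z] using mul_pos hl ha
  have hs : (-a - 1).re ≤ 0 := by rw [sub_re, neg_re, one_re]; linarith
  rw [← integral_const_mul]
  calc Gi l a = ∫ v in Ioi (0 : ℝ), z * ((z + z * v) ^ (-a - 1) * cexp (-(z + z * v))) :=
        (integral_cpow_mul_exp_neg_along_ray hz hs hz).symm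
    _ = ∫ t in Ioi (0 : ℝ), Real.exp t • (z * ((z + z * ↑(Real.exp t - 1)) ^ (-a - 1) *
          cexp (-(z + z * ↑(Real.exp t - 1))))) :=
        (integral_Ioi_exp_smul_comp_exp_sub_one _).symm
    _ = _ := by
        congr 1
        ext t
        rw [show z + z * ↑(Real.exp t - 1) = Real.exp t * z by push_cast; ring,
          exp_smul_mul_cpow_mul_exp_neg (by rintro h; simp [h] at hz) (-a) t, mul_assoc,
          ← Complex.exp_add]
        congr 2
        simp only [z, ofReal_exp]
        ring
end
end
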